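/- Let J be an almost complex structure on a domain Ω ⊂ ℂⁿ with complex matrix A (defined by (J_st + J)^{-1}(J_st − J)v = A v̄), and let t = t(z) be a change of local coordinates. Then the complex matrix A' of J in the coordinates t satisfies the transformation rule A' = (t_z A + t_z̄)(t̄_z̄ + t̄_z A)^{-1}, whenever the inverse exists. -/

import Mathlib

/-!
Write `ℝ`-linear endomorphisms of `ℂⁿ` as `v ↦ M v + N v̄`; they compose by a twisted matrix
product, and `dt` is `v ↦ P v + Q v̄`. The defining relation `(J_st + J) L = J_st - J` of
`L v = A v̄` gives `(J_st + J)(1 - L) = 2 J`, `(J_st + J)(1 + L) = 2 J_st` and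
`J (1 + L) = J_st (1 - L)`. Combined with `J' dt = dt J` and `J_st (v ↦ P v - Q v̄) = dt J_st`,
and after cancelling the unit `J_st + J'`, this yields
`(1 - L') dt (1 + L) = (1 + L') (v ↦ P v - Q v̄) (1 - L)`.
Comparing the antilinear parts of both sides gives `P A + Q = A' (P̄ + Q̄ A)`.
-/

open Complex Matrix

/-- The standard complex structure on `ℂⁿ`: multiplication by `i`, as an `ℝ`-linear map. -/
noncomputable def Jstd (n : ℕ) : Module.End ℝ (Fin n → ℂ) where
  toFun v := Complex.I • v
  map_add' x y := smul_add _ x y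
  map_smul' c x := smul_comm Complex.I c x

/-- Entrywise complex conjugate of a matrix. -/
def mconj {n : ℕ} (A : Matrix (Fin n) (Fin n) ℂ) : Matrix (Fin n) (Fin n) ℂ :=
  A.map (starRingEnd ℂ)

section CayleyTransform

variable {R : Type*} [Ring R] {s j j' l l' t t' : R}

theorem add_mul_one_sub_of_add_mul_eq (h : (s + j) * l = s - j) :
    (s + j) * (1 - l) = j + j := by
  rw [mul_sub, mul_one, h]; abel

theorem add_mul_one_add_of_add_mul_eq (h : (s + j) * l = s - j) :
    (s + j) * (1 + l) = s + s := by
  rw [mul_add, mul_one, h]; abel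

theorem mul_one_add_of_add_mul_eq (h : (s + j) * l = s - j) : j * (1 + l) = s * (1 - l) := by
  rw [mul_add, mul_sub, mul_one, mul_one, ← sub_eq_zero]
  calc j + j * l - (s - s * l) = (s + j) * l - (s - j) := by noncomm_ring
    _ = 0 := by rw [h, sub_self]

theorem one_sub_mul_mul_one_add_eq (hl : (s + j) * l = s - j) (hl' : (s + j') * l' = s - j')
    (hj : j' * t = t * j) (hs : s * t' = t * s) (hu : IsUnit (s + j')) :
    (1 - l') * t * (1 + l) = (1 + l') * t' * (1 - l) := by
  apply hu.mul_left_cancel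
  calc (s + j') * ((1 - l') * t * (1 + l))
      = ((s + j') * (1 - l')) * t * (1 + l) := by simp only [mul_assoc]
    _ = t * (j * (1 + l)) + t * (j * (1 + l)) := by
        rw [add_mul_one_sub_of_add_mul_eq hl', add_mul, add_mul, hj, mul_assoc, ← mul_add]
    _ = t * (s * (1 - l)) + t * (s * (1 - l)) := by rw [mul_one_add_of_add_mul_eq hl]
    _ = ((s + j') * (1 + l')) * t' * (1 - l) := by
        rw [add_mul_one_add_of_add_mul_eq hl', add_mul, add_mul, hs, mul_assoc, ← mul_add]
    _ = (s + j') * ((1 + l') * t' * (1 - l)) := by simp only [mul_assoc]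

end CayleyTransform

variable {n : ℕ}

@[simp]
theorem mconj_one : mconj (1 : Matrix (Fin n) (Fin n) ℂ) = 1 := by
  ext i j; simp [mconj, Matrix.one_apply, apply_ite]

@[simp]
theorem mconj_neg (M : Matrix (Fin n) (Fin n) ℂ) : mconj (-M) = -mconj M := by
  ext i j; simp [mconj]

theorem star_mulVec_eq_mconj_mulVec (M : Matrix (Fin n) (Fin n) ℂ) (v : Fin n → ℂ) :
    star (M *ᵥ v) = mconj M *ᵥ star v := by
  funext i
  simp [Matrix.mulVec, dotProduct, mconj, star_sum]

noncomputable def realEnd (M N : Matrix (Fin n) (Fin n) ℂ) : Module.End ℝ (Fin n → ℂ) where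
  toFun v := M *ᵥ v + N *ᵥ star v
  map_add' x y := by simp only [star_add, mulVec_add]; abel
  map_smul' c x := by simp only [star_smul, star_trivial, mulVec_smul, RingHom.id_apply, smul_add]

@[simp]
theorem realEnd_apply (M N : Matrix (Fin n) (Fin n) ℂ) (v : Fin n → ℂ) :
    realEnd M N v = M *ᵥ v + N *ᵥ star v := rfl

theorem eq_realEnd_zero_of_apply {f : Module.End ℝ (Fin n → ℂ)} {N : Matrix (Fin n) (Fin n) ℂ}
    (h : ∀ v, f v = N *ᵥ star v) : f = realEnd 0 N :=
  LinearMap.ext fun v => by simp [h]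

theorem one_add_realEnd_zero (N : Matrix (Fin n) (Fin n) ℂ) : 1 + realEnd 0 N = realEnd 1 N :=
  LinearMap.ext fun v => by simp

theorem one_sub_realEnd_zero (N : Matrix (Fin n) (Fin n) ℂ) : 1 - realEnd 0 N = realEnd 1 (-N) :=
  LinearMap.ext fun v => by simp [sub_eq_add_neg, neg_mulVec]

theorem realEnd_mul (M₁ N₁ M₂ N₂ : Matrix (Fin n) (Fin n) ℂ) :
    realEnd M₁ N₁ * realEnd M₂ N₂
      = realEnd (M₁ * M₂ + N₁ * mconj N₂) (M₁ * N₂ + N₁ * mconj M₂) := by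
  refine LinearMap.ext fun v => ?_
  simp only [Module.End.mul_apply, realEnd_apply, star_add, mulVec_add,
    star_mulVec_eq_mconj_mulVec, star_star, mulVec_mulVec, add_mulVec]
  abel

theorem Jstd_mul_realEnd (P Q : Matrix (Fin n) (Fin n) ℂ) :
    Jstd n * realEnd P (-Q) = realEnd P Q * Jstd n := by
  refine LinearMap.ext fun v => ?_
  change I • realEnd P (-Q) v = realEnd P Q (I • v)
  simp [star_smul, mulVec_smul, smul_add, neg_mulVec, mulVec_neg]

theorem realEnd_apply_add_I_smul_apply_I_smul (M N : Matrix (Fin n) (Fin n) ℂ)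
    (v : Fin n → ℂ) :
    realEnd M N v + I • realEnd M N (I • v) = (2 : ℂ) • (N *ᵥ star v) := by
  simp only [realEnd_apply, star_smul, Complex.star_def, conj_I, neg_smul, mulVec_neg,
    mulVec_smul, smul_add, smul_neg, smul_smul, I_mul_I, one_smul, two_smul, neg_neg]
  abel

theorem right_eq_of_realEnd_eq {M N M' N' : Matrix (Fin n) (Fin n) ℂ}
    (h : realEnd M N = realEnd M' N') : N = N' := by
  rw [ext_iff_mulVec]
  intro w
  have hw := realEnd_apply_add_I_smul_apply_I_smul M N (star w)
  rw [h, realEnd_apply_add_I_smul_apply_I_smul, star_star] at hw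
  exact (smul_right_injective _ two_ne_zero hw).symm

theorem mul_mconj_add_eq_of_realEnd_eq {A A' P Q : Matrix (Fin n) (Fin n) ℂ}
    (h : realEnd 1 (-A') * realEnd P Q * realEnd 1 A
      = realEnd 1 A' * realEnd P (-Q) * realEnd 1 (-A)) :
    A' * (mconj P + mconj Q * A) = P * A + Q := by
  simp only [realEnd_mul] at h
  have hX := right_eq_of_realEnd_eq h
  simp only [mconj_one, mconj_neg] at hX
  have hX' : P * A + Q - A' * (mconj P + mconj Q * A)
      = -(P * A + Q - A' * (mconj P + mconj Q * A)) := by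
    rw [← sub_eq_zero] at hX ⊢
    convert hX using 1
    noncomm_ring
  exact (sub_eq_zero.mp ((self_eq_neg (G := Fin n → Fin n → ℂ)).mp hX')).symm

theorem realEnd_zero_of_inv_mul_eq {S : Module.End ℝ (Fin n → ℂ)} (hS : IsUnit (Jstd n + S))
    {A : Matrix (Fin n) (Fin n) ℂ}
    (hA : ∀ v, ((hS.unit⁻¹ : Units (Module.End ℝ (Fin n → ℂ))) * (Jstd n - S)) v = A *ᵥ star v) :
    (Jstd n + S) * realEnd 0 A = Jstd n - S := by
  have h := (Units.inv_mul_eq_iff_eq_mul _).mp (eq_realEnd_zero_of_apply hA)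
  rwa [hS.unit_spec, eq_comm] at h

theorem stmt8_general (n : ℕ) (J : Module.End ℝ (Fin n → ℂ))
    (A A' : Matrix (Fin n) (Fin n) ℂ)
    (hu : IsUnit (Jstd n + J))
    (hA : ∀ v, ((hu.unit⁻¹ : Units (Module.End ℝ (Fin n → ℂ))) * (Jstd n - J)) v
      = A.mulVec (star v))
    -- the differential of the coordinate change `t`, with Wirtinger Jacobians `P, Q`
    (P Q : Matrix (Fin n) (Fin n) ℂ) (T : Module.End ℝ (Fin n → ℂ))
    (hT : ∀ v, T v = P.mulVec v + Q.mulVec (star v))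
    (hTu : IsUnit T)
    -- the direct image `J' = dt ∘ J ∘ dt⁻¹` of `J` under the coordinate change
    (J' : Module.End ℝ (Fin n → ℂ))
    (hJ' : J' = T * J * (hTu.unit⁻¹ : Units (Module.End ℝ (Fin n → ℂ))))
    (hu' : IsUnit (Jstd n + J'))
    (hA' : ∀ v, ((hu'.unit⁻¹ : Units (Module.End ℝ (Fin n → ℂ))) * (Jstd n - J')) v
      = A'.mulVec (star v))
    (hden : IsUnit (mconj P + mconj Q * A)) :
    A' = (P * A + Q) * (mconj P + mconj Q * A)⁻¹ := by
  obtain rfl : T = realEnd P Q := LinearMap.ext hT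
  have hJT : J' * realEnd P Q = realEnd P Q * J := by
    have h := (Units.eq_mul_inv_iff_mul_eq _).mp hJ'
    rwa [hTu.unit_spec] at h
  have key := one_sub_mul_mul_one_add_eq (realEnd_zero_of_inv_mul_eq hu hA)
    (realEnd_zero_of_inv_mul_eq hu' hA') hJT (Jstd_mul_realEnd P Q) hu'
  rw [one_sub_realEnd_zero, one_add_realEnd_zero, one_add_realEnd_zero,
    one_sub_realEnd_zero] at key
  rw [← mul_mconj_add_eq_of_realEnd_eq key,
    mul_nonsing_inv_cancel_right _ _ ((isUnit_iff_isUnit_det _).mp hden)]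

/-- Transformation rule for the complex matrix of an almost complex structure under a change
of coordinates with Wirtinger Jacobians `P = t_z`, `Q = t_z̄`:
`A' = (t_z A + t_z̄)(t̄_z̄ + t̄_z A)⁻¹ = (P A + Q)(P̄ + Q̄ A)⁻¹`. -/
theorem stmt8 (n : ℕ) (J : Module.End ℝ (Fin n → ℂ)) (hJ : J * J = -1)
    (A A' : Matrix (Fin n) (Fin n) ℂ)
    (hu : IsUnit (Jstd n + J))
    (hA : ∀ v, ((hu.unit⁻¹ : Units (Module.End ℝ (Fin n → ℂ))) * (Jstd n - J)) v
      = A.mulVec (star v))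
    -- the differential of the coordinate change `t`, with Wirtinger Jacobians `P, Q`
    (P Q : Matrix (Fin n) (Fin n) ℂ) (T : Module.End ℝ (Fin n → ℂ))
    (hT : ∀ v, T v = P.mulVec v + Q.mulVec (star v))
    (hTu : IsUnit T)
    -- the direct image `J' = dt ∘ J ∘ dt⁻¹` of `J` under the coordinate change
    (J' : Module.End ℝ (Fin n → ℂ))
    (hJ' : J' = T * J * (hTu.unit⁻¹ : Units (Module.End ℝ (Fin n → ℂ))))
    (hu' : IsUnit (Jstd n + J'))
    (hA' : ∀ v, ((hu'.unit⁻¹ : Units (Module.End ℝ (Fin n → ℂ))) * (Jstd n - J')) v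
      = A'.mulVec (star v))
    (hden : IsUnit (mconj P + mconj Q * A)) :
    A' = (P * A + Q) * (mconj P + mconj Q * A)⁻¹ :=
  stmt8_general n J A A' hu hA P Q T hT hTu J' hJ' hu' hA' hden
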